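/- Let n ≥ 2, 1* = n/(n-1), Λ ≥ 1, and let Ψ(t) = t^{1*} for t ≤ Λ, Ψ(t) = 1*Λ^{1*-1}t + (1-1*)Λ^{1*} for t ≥ Λ. Then for every constant a > 0, ∫_{B(0,2)} Ψ(a |z|^{-(n-1)}) dz ≤ C(n, Λ) a^{1*} (1 + |log a|), where C(n, Λ) depends only on n and Λ. -/

import Mathlib

open MeasureTheory

/-- The linear continuation beyond `t = Λ` of the power function `t ↦ t^p`. -/
noncomputable def PsiCont (p Λ : ℝ) (t : ℝ) : ℝ :=
  if t ≤ Λ then t ^ p else p * Λ ^ (p - 1) * t + (1 - p) * Λ ^ p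

lemma rpow_sub_one_mul {x q : ℝ} (hx : 0 < x) : x ^ (q - 1) * x = x ^ q := by
  have h := (Real.rpow_add hx (q - 1) 1).symm
  simpa using h

lemma PsiCont_nonneg {p Λ t : ℝ} (hp : 1 ≤ p) (hΛ : 0 < Λ) (ht : 0 ≤ t) :
    0 ≤ PsiCont p Λ t := by
  unfold PsiCont
  split_ifs with h
  · exact Real.rpow_nonneg ht p
  · push_neg at h
    have h1 : Λ ^ (p-1) * Λ = Λ ^ p := rpow_sub_one_mul hΛ
    nlinarith [Real.rpow_pos_of_pos hΛ (p-1), Real.rpow_pos_of_pos hΛ p,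
      mul_nonneg (mul_nonneg (by linarith : (0:ℝ) ≤ p) (Real.rpow_pos_of_pos hΛ (p-1)).le)
        (by linarith : (0:ℝ) ≤ t - Λ)]

lemma PsiCont_le {p Λ t : ℝ} (hp : 1 ≤ p) (hΛ : 0 < Λ) (ht : 0 ≤ t) :
    PsiCont p Λ t ≤ p * Λ ^ (p - 1) * t := by
  unfold PsiCont
  split_ifs with h
  · rcases eq_or_lt_of_le ht with h0 | h0
    · simp [← h0, Real.zero_rpow (by linarith : p ≠ 0)]
    · have h1 : t ^ p = t ^ (p-1) * t := (rpow_sub_one_mul h0).symm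
      have h2 : t ^ (p-1) ≤ Λ ^ (p-1) := Real.rpow_le_rpow ht h (by linarith)
      nlinarith [Real.rpow_pos_of_pos hΛ (p-1),
        mul_nonneg (mul_nonneg (by linarith : (0:ℝ) ≤ p - 1)
          (Real.rpow_pos_of_pos hΛ (p-1)).le) ht]
  · nlinarith [Real.rpow_pos_of_pos hΛ p,
      mul_nonneg (by linarith : (0:ℝ) ≤ p - 1) (Real.rpow_pos_of_pos hΛ p).le]

set_option maxHeartbeats 1000000 in
theorem integral_PsiCont_riesz_le (n : ℕ) (hn : 2 ≤ n) (Λ : ℝ) (hΛ : 1 ≤ Λ) :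
    ∃ C : ℝ, 0 < C ∧ ∀ a : ℝ, 0 < a →
      ∫ z in Metric.ball (0 : EuclideanSpace ℝ (Fin n)) 2,
          PsiCont ((n : ℝ) / (n - 1)) Λ (a * ‖z‖ ^ (-((n : ℝ) - 1)))
        ≤ C * a ^ ((n : ℝ) / (n - 1)) * (1 + |Real.log a|) := by
  haveI : Nontrivial (EuclideanSpace ℝ (Fin n)) :=
    Module.nontrivial_of_finrank_pos (by rw [finrank_euclideanSpace_fin]; omega)
  set p : ℝ := (n : ℝ) / ((n:ℝ) - 1) with hp_def
  set s : ℝ := (n : ℝ) - 1 with hs_def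
  have hs1 : (1:ℝ) ≤ s := by
    have : (2:ℝ) ≤ (n:ℝ) := by exact_mod_cast hn
    simp only [hs_def]; linarith
  have hs0 : (0:ℝ) < s := by linarith
  have hΛ0 : (0:ℝ) < Λ := by linarith
  have hp1 : 1 < p := by
    rw [hp_def, lt_div_iff₀ (by linarith)]; linarith
  have hps : s * p = (n:ℝ) := by
    rw [hp_def]; field_simp
  have hp1s : p = 1 + 1/s := by
    rw [hp_def]; field_simp; rw [hs_def]; ring
  set K : ℝ := p * Λ ^ (p - 1) with hK_def
  have hΛp1 : (1:ℝ) ≤ Λ ^ (p-1) := Real.one_le_rpow hΛ (by linarith)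
  have hK1 : (1:ℝ) ≤ K := by nlinarith
  set V : ℝ := (volume (Metric.ball (0 : EuclideanSpace ℝ (Fin n)) 1)).toReal with hV_def
  have hV0 : 0 ≤ V := ENNReal.toReal_nonneg
  set D : ℝ := 3*K + Real.log 2 + Real.log Λ + 1 with hD_def
  have hlog2 : (0:ℝ) ≤ Real.log 2 := Real.log_nonneg (by norm_num)
  have hlogΛ : (0:ℝ) ≤ Real.log Λ := Real.log_nonneg hΛ
  have hD1 : (1:ℝ) ≤ D := by nlinarith
  refine ⟨(n:ℝ) * V * D + 1, by positivity, ?_⟩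
  intro a ha
  set G : ℝ → ℝ := fun r => PsiCont p Λ (a * r ^ (-s)) with hG_def
  set H : ℝ → ℝ := fun r => r ^ (n-1) * G r with hH_def
  -- polar coordinates
  have hpolar : ∫ z in Metric.ball (0 : EuclideanSpace ℝ (Fin n)) 2, G ‖z‖
      = (n:ℝ) * V * ∫ r in Set.Ioo (0:ℝ) 2, H r := by
    rw [← integral_indicator measurableSet_ball]
    have h1 : (Metric.ball (0 : EuclideanSpace ℝ (Fin n)) 2).indicator (fun z => G ‖z‖)
        = fun z => (Set.Iio (2:ℝ)).indicator G ‖z‖ := by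
      funext z
      by_cases h : ‖z‖ < 2 <;> simp [Set.indicator, mem_ball_zero_iff, h]
    rw [h1, integral_fun_norm_addHaar volume ((Set.Iio (2:ℝ)).indicator G)]
    rw [finrank_euclideanSpace_fin, nsmul_eq_mul, smul_eq_mul]
    have h2 : ∀ r : ℝ, r ^ (n-1) • (Set.Iio (2:ℝ)).indicator G r
        = (Set.Iio (2:ℝ)).indicator H r := by
      intro r
      by_cases h : r ∈ Set.Iio (2:ℝ) <;> simp [Set.indicator, h, hH_def]
    simp_rw [h2]
    rw [setIntegral_indicator measurableSet_Iio, Set.Ioi_inter_Iio]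
    rw [measureReal_def, ← hV_def]
    ring
  -- pointwise facts for r > 0
  have hrpow : ∀ r : ℝ, 0 < r → (r:ℝ) ^ (n-1:ℕ) = r ^ s := by
    intro r hr
    rw [← Real.rpow_natCast r (n-1)]
    congr 1
    push_cast [Nat.cast_sub (by omega : 1 ≤ n)]
    ring
  have hident : ∀ r : ℝ, 0 < r → r ^ (n-1:ℕ) * (a * r ^ (-s)) = a := by
    intro r hr
    rw [hrpow r hr]
    have h : r ^ s * (a * r ^ (-s)) = a * (r ^ s * r ^ (-s)) := by ring
    rw [h, ← Real.rpow_add hr]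
    simp
  have hHnonneg : ∀ r : ℝ, 0 < r → 0 ≤ H r := by
    intro r hr
    apply mul_nonneg (by positivity)
    exact PsiCont_nonneg hp1.le hΛ0 (by positivity)
  have hHle : ∀ r : ℝ, 0 < r → H r ≤ K * a := by
    intro r hr
    have h1 : G r ≤ K * (a * r ^ (-s)) := PsiCont_le hp1.le hΛ0 (by positivity)
    calc H r ≤ r ^ (n-1:ℕ) * (K * (a * r ^ (-s))) := by
          apply mul_le_mul_of_nonneg_left h1 (by positivity)
      _ = K * (r ^ (n-1:ℕ) * (a * r ^ (-s))) := by ring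
      _ = K * a := by rw [hident r hr]
  -- measurability and integrability
  have hHmeas : Measurable H := by
    have hpsi : Measurable (PsiCont p Λ) := by
      apply Measurable.ite (measurableSet_le measurable_id measurable_const)
      · fun_prop
      · fun_prop
    apply Measurable.mul (by fun_prop)
    exact hpsi.comp (by fun_prop)
  have hHint : IntegrableOn H (Set.Ioo (0:ℝ) 2) volume := by
    apply Measure.integrableOn_of_bounded (M := K * a)
    · rw [Real.volume_Ioo]; exact ENNReal.ofReal_ne_top
    · exact hHmeas.aestronglyMeasurable
    · filter_upwards [ae_restrict_mem measurableSet_Ioo] with r hr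
      rw [Real.norm_eq_abs, abs_of_nonneg (hHnonneg r hr.1)]
      exact hHle r hr.1
  -- main bound on the 1D integral
  have hap : 0 < a ^ p := Real.rpow_pos_of_pos ha p
  have habs : 0 ≤ |Real.log a| := abs_nonneg _
  have hK0 : (0:ℝ) < K := by linarith
  have hI : ∫ r in Set.Ioo (0:ℝ) 2, H r ≤ D * a ^ p * (1 + |Real.log a|) := by
    by_cases hcase : Λ * 2 ^ s ≤ a
    · -- large a : constant bound on the whole interval
      have h2s : (1:ℝ) ≤ 2 ^ s := Real.one_le_rpow (by norm_num) hs0.le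
      have ha1 : (1:ℝ) ≤ a := by nlinarith
      have h1 : ∫ r in Set.Ioo (0:ℝ) 2, H r ≤ ∫ _ in Set.Ioo (0:ℝ) 2, (K * a) := by
        apply setIntegral_mono_on hHint (integrableOn_const (by
          rw [Real.volume_Ioo]; exact ENNReal.ofReal_ne_top)) measurableSet_Ioo
        intro r hr; exact hHle r hr.1
      have h2 : ∫ _ in Set.Ioo (0:ℝ) 2, (K * a) = 2 * (K * a) := by
        rw [setIntegral_const, measureReal_def, Real.volume_Ioo, smul_eq_mul, ENNReal.toReal_ofReal] <;> norm_num
      have h3 : a ≤ a ^ p := by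
        calc a = a ^ (1:ℝ) := (Real.rpow_one a).symm
        _ ≤ a ^ p := Real.rpow_le_rpow_of_exponent_le ha1 hp1.le
      have h4 : 2 * (K * a) ≤ 2 * (K * a ^ p) := by nlinarith
      have h5 : 2 * (K * a ^ p) ≤ D * a ^ p * 1 := by nlinarith
      have h6 : D * a ^ p * 1 ≤ D * a ^ p * (1 + |Real.log a|) := by
        have : 0 ≤ D * a ^ p * |Real.log a| := by positivity
        linarith
      linarith [h1.trans h2.le]
    · -- small a : split the interval at m = (a/Λ)^(1/s)
      push_neg at hcase
      set m : ℝ := (a / Λ) ^ (1/s) with hm_def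
      have haΛ : 0 < a / Λ := by positivity
      have hm0 : 0 < m := Real.rpow_pos_of_pos haΛ _
      have hms : m ^ s = a / Λ := by
        rw [hm_def, ← Real.rpow_mul haΛ.le, one_div, inv_mul_cancel₀ hs0.ne', Real.rpow_one]
      have hm2 : m ≤ 2 := by
        have h1 : a / Λ ≤ 2 ^ s := by
          rw [div_le_iff₀ hΛ0]; linarith [hcase]
        calc m = (a/Λ) ^ (1/s) := hm_def
          _ ≤ (2 ^ s) ^ (1/s) := Real.rpow_le_rpow haΛ.le h1 (by positivity)
          _ = 2 := by
            rw [← Real.rpow_mul (by norm_num), mul_one_div, div_self hs0.ne', Real.rpow_one]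
      have hsplit : Set.Ioo (0:ℝ) 2 = Set.Ioo 0 m ∪ Set.Ico m 2 :=
        (Set.Ioo_union_Ico_eq_Ioo hm0 hm2).symm
      have hdisj : Disjoint (Set.Ioo (0:ℝ) m) (Set.Ico m 2) := by
        apply Set.disjoint_left.2
        rintro x hx1 hx2
        exact absurd hx2.1 (not_le.2 hx1.2)
      have hint1 : IntegrableOn H (Set.Ioo 0 m) volume :=
        hHint.mono_set (by rw [hsplit]; exact Set.subset_union_left)
      have hint2 : IntegrableOn H (Set.Ico m 2) volume :=
        hHint.mono_set (by rw [hsplit]; exact Set.subset_union_right)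
      have hsum : ∫ r in Set.Ioo (0:ℝ) 2, H r
          = (∫ r in Set.Ioo (0:ℝ) m, H r) + ∫ r in Set.Ico m 2, H r := by
        rw [hsplit]
        exact setIntegral_union hdisj measurableSet_Ico hint1 hint2
      have hb1 : ∫ r in Set.Ioo (0:ℝ) m, H r ≤ m * (K * a) := by
        have h1 : ∫ r in Set.Ioo (0:ℝ) m, H r ≤ ∫ _ in Set.Ioo (0:ℝ) m, (K * a) := by
          apply setIntegral_mono_on hint1 (integrableOn_const (by
            rw [Real.volume_Ioo]; exact ENNReal.ofReal_ne_top)) measurableSet_Ioo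
          intro r hr; exact hHle r hr.1
        have h2 : ∫ _ in Set.Ioo (0:ℝ) m, (K * a) = m * (K * a) := by
          rw [setIntegral_const, measureReal_def, Real.volume_Ioo, smul_eq_mul, sub_zero,
            ENNReal.toReal_ofReal hm0.le]
        linarith [h1.trans h2.le]
      have hb2 : ∫ r in Set.Ico m 2, H r = a ^ p * (Real.log 2 - Real.log m) := by
        have hcong : ∀ r ∈ Set.Ico m 2, H r = a ^ p * r⁻¹ := by
          intro r hr
          have hr0 : 0 < r := lt_of_lt_of_le hm0 hr.1
          have hrs0 : 0 < r ^ s := Real.rpow_pos_of_pos hr0 s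
          have hts : a * r ^ (-s) ≤ Λ := by
            have h1 : m ^ s ≤ r ^ s := Real.rpow_le_rpow hm0.le hr.1 hs0.le
            rw [hms] at h1
            rw [Real.rpow_neg hr0.le, mul_comm, inv_mul_le_iff₀ hrs0]
            calc a = (a / Λ) * Λ := by field_simp
              _ ≤ r ^ s * Λ := by nlinarith
          have hHr : H r = r ^ (n-1:ℕ) * (a * r ^ (-s)) ^ p := by
            simp only [hH_def, hG_def, PsiCont, if_pos hts]
          rw [hHr, Real.mul_rpow ha.le (Real.rpow_nonneg hr0.le _), hrpow r hr0,
            ← Real.rpow_mul hr0.le,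
            show r ^ s * (a ^ p * r ^ (-s * p)) = a ^ p * (r ^ s * r ^ (-s * p)) from by ring,
            ← Real.rpow_add hr0,
            show s + -s * p = -1 from by linarith [hps], Real.rpow_neg_one]
        rw [setIntegral_congr_fun measurableSet_Ico hcong, integral_const_mul]
        congr 1
        rw [Measure.restrict_congr_set Ico_ae_eq_Ioc, ← intervalIntegral.integral_of_le hm2,
          integral_inv_of_pos hm0 two_pos, Real.log_div (by norm_num) hm0.ne']
      have hmlog : Real.log m = (1/s) * (Real.log a - Real.log Λ) := by
        rw [hm_def, Real.log_rpow haΛ, Real.log_div ha.ne' hΛ0.ne']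
      have hq1 : 1/s ≤ 1 := by rw [div_le_one hs0]; linarith
      have hlogm_bound : Real.log 2 - Real.log m ≤ Real.log 2 + Real.log Λ + |Real.log a| := by
        rw [hmlog]
        have h1 : -(Real.log a) ≤ |Real.log a| := neg_le_abs _
        have h2 : (1/s) * (Real.log Λ - Real.log a) ≤ (1/s) * (Real.log Λ + |Real.log a|) :=
          mul_le_mul_of_nonneg_left (by linarith) (by positivity)
        have h3 : (1/s) * (Real.log Λ + |Real.log a|) ≤ 1 * (Real.log Λ + |Real.log a|) :=
          mul_le_mul_of_nonneg_right hq1 (by positivity)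
        linarith
      have hma : m * a ≤ a ^ p := by
        have h1 : m ≤ a ^ (1/s) := by
          rw [hm_def]
          exact Real.rpow_le_rpow haΛ.le (div_le_self ha.le hΛ) (by positivity)
        have h2 : a ^ p = a ^ (1/s) * a := by
          rw [hp1s, add_comm, Real.rpow_add ha, Real.rpow_one]
        rw [h2]
        exact mul_le_mul_of_nonneg_right h1 ha.le
      calc ∫ r in Set.Ioo (0:ℝ) 2, H r
          = (∫ r in Set.Ioo (0:ℝ) m, H r) + ∫ r in Set.Ico m 2, H r := hsum
        _ ≤ m * (K * a) + a ^ p * (Real.log 2 - Real.log m) := by rw [hb2] at hsum ⊢; linarith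
        _ ≤ K * a ^ p + a ^ p * (Real.log 2 + Real.log Λ + |Real.log a|) := by
            have h1 : m * (K * a) = K * (m * a) := by ring
            have h2 : K * (m * a) ≤ K * a ^ p := mul_le_mul_of_nonneg_left hma hK0.le
            have h3 := mul_le_mul_of_nonneg_left hlogm_bound hap.le
            linarith
        _ ≤ D * a ^ p * (1 + |Real.log a|) := by
            nlinarith [mul_nonneg hap.le habs, mul_nonneg (mul_nonneg hK0.le hap.le) habs,
              mul_nonneg (mul_nonneg hlog2 hap.le) habs,
              mul_nonneg (mul_nonneg hlogΛ hap.le) habs, hap]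
  have hpolar' : (∫ z in Metric.ball (0 : EuclideanSpace ℝ (Fin n)) 2,
      PsiCont p Λ (a * ‖z‖ ^ (-s)))
      = (n:ℝ) * V * ∫ r in Set.Ioo (0:ℝ) 2, H r := hpolar
  rw [hpolar']
  calc (n:ℝ) * V * ∫ r in Set.Ioo (0:ℝ) 2, H r
      ≤ (n:ℝ) * V * (D * a ^ p * (1 + |Real.log a|)) := by
        apply mul_le_mul_of_nonneg_left hI (by positivity)
    _ ≤ ((n:ℝ) * V * D + 1) * a ^ p * (1 + |Real.log a|) := by nlinarith
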